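/- Let G be a 2K₂-free graph containing an induced 5-cycle Q = {v₁, v₂, v₃, v₄, v₅} with vᵢ adjacent to v_{i+1} (indices modulo 5). For each i, let Aᵢ = {u ∈ V(G)\Q : N(u) ∩ Q = {v_{i−1}, v_{i+1}}} and Bᵢ = {u ∈ V(G)\Q : N(u) ∩ Q = {vᵢ, v_{i−2}, v_{i+2}}}. Then for each i, every vertex of Bᵢ is adjacent to every vertex of B_{i−1} ∪ B_{i+1} ∪ Aᵢ. -/

import Mathlib

open SimpleGraph

/-- The join `G ∨ H` of two graphs: the disjoint union of `G` and `H` together with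
all edges between the two parts. -/
def SimpleGraph.join {α β : Type*} (G : SimpleGraph α) (H : SimpleGraph β) :
    SimpleGraph (α ⊕ β) where
  Adj u v := match u, v with
    | Sum.inl u, Sum.inl v => G.Adj u v
    | Sum.inr u, Sum.inr v => H.Adj u v
    | Sum.inl _, Sum.inr _ => True
    | Sum.inr _, Sum.inl _ => True
  symm := ⟨fun u v => match u, v with
    | Sum.inl u, Sum.inl v => fun h => G.adj_symm h
    | Sum.inr u, Sum.inr v => fun h => H.adj_symm h
    | Sum.inl _, Sum.inr _ => fun _ => trivial
    | Sum.inr _, Sum.inl _ => fun _ => trivial⟩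
  loopless := ⟨fun u => by cases u <;> simp⟩

/-- `G` is `H`-free: `G` has no induced subgraph isomorphic to `H`
(no graph embedding of `H` into `G`). -/
def SimpleGraph.HFree {α β : Type*} (G : SimpleGraph α) (H : SimpleGraph β) : Prop :=
  ¬ Nonempty (H ↪g G)

/-- `2K₂`: the disjoint union of two copies of `K₂`. -/
def twoK2 : SimpleGraph (Fin 2 ⊕ Fin 2) :=
  (⊤ : SimpleGraph (Fin 2)) ⊕g (⊤ : SimpleGraph (Fin 2))

/-- `P₄ ∨ Kₙ`: the join of the path on `4` vertices with the complete graph on `n` vertices. -/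
def P4JoinK (n : ℕ) : SimpleGraph (Fin 4 ⊕ Fin n) :=
  SimpleGraph.join (pathGraph 4) (⊤ : SimpleGraph (Fin n))

/-- `Aᵢ`: vertices outside the induced five-cycle `v` whose neighbourhood on the cycle
is exactly `{v (i-1), v (i+1)}`. -/
def Aset {V : Type*} (G : SimpleGraph V) (v : Fin 5 → V) (i : Fin 5) : Set V :=
  {u | u ∉ Set.range v ∧ G.neighborSet u ∩ Set.range v = {v (i - 1), v (i + 1)}}

/-- `Bᵢ`: vertices outside the induced five-cycle `v` whose neighbourhood on the cycle
is exactly `{v i, v (i-2), v (i+2)}`. -/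
def Bset {V : Type*} (G : SimpleGraph V) (v : Fin 5 → V) (i : Fin 5) : Set V :=
  {u | u ∉ Set.range v ∧ G.neighborSet u ∩ Set.range v = {v i, v (i - 2), v (i + 2)}}

/-- `Dᵢ`: vertices outside the induced five-cycle `v` whose neighbourhood on the cycle
is exactly `Q \ {v i}`. -/
def Dset {V : Type*} (G : SimpleGraph V) (v : Fin 5 → V) (i : Fin 5) : Set V :=
  {u | u ∉ Set.range v ∧ G.neighborSet u ∩ Set.range v = Set.range v \ {v i}}

/-- `F`: vertices outside the induced five-cycle `v` adjacent to all of the cycle. -/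
def Fset {V : Type*} (G : SimpleGraph V) (v : Fin 5 → V) : Set V :=
  {u | u ∉ Set.range v ∧ G.neighborSet u ∩ Set.range v = Set.range v}

/-- `Z`: vertices outside the induced five-cycle `v` with no neighbour on the cycle. -/
def Zset {V : Type*} (G : SimpleGraph V) (v : Fin 5 → V) : Set V :=
  {u | u ∉ Set.range v ∧ G.neighborSet u ∩ Set.range v = ∅}


lemma pair_embed' {V : Type} (G : SimpleGraph V) {x a y b : V}
    (hxa : G.Adj x a) (hyb : G.Adj y b)
    (hxy : ¬G.Adj x y) (hxb : ¬G.Adj x b) (hay : ¬G.Adj a y) (hab : ¬G.Adj a b)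
    (nxy : x ≠ y) (nxb : x ≠ b) (nay : a ≠ y) (nab : a ≠ b) :
    Nonempty (twoK2 ↪g G) := by
  have nxa := hxa.ne
  have nyb := hyb.ne
  refine ⟨⟨⟨Sum.elim ![x, a] ![y, b], ?_⟩, ?_⟩⟩
  · rintro (u | u) (w | w) h <;> fin_cases u <;> fin_cases w <;> simp_all
  · rintro (u | u) (w | w) <;> fin_cases u <;> fin_cases w <;>
      simp only [twoK2, DFunLike.coe, SimpleGraph.sum_adj, Sum.elim_inl, Sum.elim_inr,
        Matrix.cons_val_zero, Matrix.cons_val_one, Matrix.head_cons, top_adj] <;>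
      simp_all [G.adj_comm, hxa.symm, hyb.symm]

lemma adj_char {V : Type} (G : SimpleGraph V) {v : Fin 5 → V} (hv : Function.Injective v)
    {u : V} {s : Finset (Fin 5)}
    (hu : G.neighborSet u ∩ Set.range v = v '' (s : Set (Fin 5))) :
    ∀ j : Fin 5, G.Adj u (v j) ↔ j ∈ s := by
  intro j
  constructor
  · intro h
    have : v j ∈ G.neighborSet u ∩ Set.range v := ⟨h, ⟨j, rfl⟩⟩
    rw [hu] at this
    obtain ⟨k, hk, hkj⟩ := this
    exact hv hkj ▸ hk
  · intro h
    have : v j ∈ G.neighborSet u ∩ Set.range v := by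
      rw [hu]; exact ⟨j, h, rfl⟩
    exact this.1

/-- In a `2K₂`-free graph with an induced five-cycle, `Bᵢ` is complete to
`B_{i−1} ∪ B_{i+1} ∪ Aᵢ`. -/
theorem stmt16 {V : Type} [Fintype V] (G : SimpleGraph V)
    (h2 : G.HFree twoK2)
    (v : Fin 5 → V) (hv : Function.Injective v)
    (hc5 : ∀ i j : Fin 5, G.Adj (v i) (v j) ↔ j = i + 1 ∨ i = j + 1) :
    ∀ i : Fin 5, ∀ x ∈ Bset G v i,
      ∀ y ∈ Bset G v (i - 1) ∪ Bset G v (i + 1) ∪ Aset G v i, G.Adj x y := by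
  have d1 : ∀ i : Fin 5, i ∉ ({i - 1, i - 1 - 2, i - 1 + 2} : Finset (Fin 5)) := by decide
  have d2 : ∀ i : Fin 5, i + 1 ∈ ({i - 1, i - 1 - 2, i - 1 + 2} : Finset (Fin 5)) := by decide
  have d4 : ∀ i : Fin 5, i + 1 ∉ ({i, i - 2, i + 2} : Finset (Fin 5)) := by decide
  have d5 : ∀ i : Fin 5, i - 2 ∉ ({i - 1, i - 1 - 2, i - 1 + 2} : Finset (Fin 5)) := by decide
  have d6 : ∀ i : Fin 5, ¬(i + 1 = i - 2 + 1 ∨ i - 2 = i + 1 + 1) := by decide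
  have d7 : ∀ i : Fin 5, i - 2 ≠ i + 1 := by decide
  have e1 : ∀ i : Fin 5, i ∉ ({i + 1, i + 1 - 2, i + 1 + 2} : Finset (Fin 5)) := by decide
  have e2 : ∀ i : Fin 5, i - 1 ∈ ({i + 1, i + 1 - 2, i + 1 + 2} : Finset (Fin 5)) := by decide
  have e4 : ∀ i : Fin 5, i - 1 ∉ ({i, i - 2, i + 2} : Finset (Fin 5)) := by decide
  have e5 : ∀ i : Fin 5, i + 2 ∉ ({i + 1, i + 1 - 2, i + 1 + 2} : Finset (Fin 5)) := by decide
  have e6 : ∀ i : Fin 5, ¬(i - 1 = i + 2 + 1 ∨ i + 2 = i - 1 + 1) := by decide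
  have e7 : ∀ i : Fin 5, i + 2 ≠ i - 1 := by decide
  have f1 : ∀ i : Fin 5, i ∉ ({i - 1, i + 1} : Finset (Fin 5)) := by decide
  have f5 : ∀ i : Fin 5, i + 2 ∉ ({i - 1, i + 1} : Finset (Fin 5)) := by decide
  intro i x hx y hy
  obtain ⟨hxr, hxn⟩ := hx
  have hxn' : G.neighborSet x ∩ Set.range v = v '' (({i, i - 2, i + 2} : Finset (Fin 5)) : Set (Fin 5)) := by
    rw [hxn]; simp [Set.image_insert_eq]
  have hX : ∀ j : Fin 5, G.Adj x (v j) ↔ j ∈ ({i, i - 2, i + 2} : Finset (Fin 5)) :=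
    adj_char G hv hxn'
  by_contra hadj
  have hnr : ∀ z : V, z ∉ Set.range v → ∀ j, z ≠ v j := by
    rintro z hz j rfl; exact hz ⟨j, rfl⟩
  rcases hy with (hy | hy) | hy
  · obtain ⟨hyr, hyn⟩ := hy
    have hyn' : G.neighborSet y ∩ Set.range v = v '' (({i - 1, i - 1 - 2, i - 1 + 2} : Finset (Fin 5)) : Set (Fin 5)) := by
      rw [hyn]; simp [Set.image_insert_eq]
    have hY : ∀ j : Fin 5, G.Adj y (v j) ↔ j ∈ ({i - 1, i - 1 - 2, i - 1 + 2} : Finset (Fin 5)) :=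
      adj_char G hv hyn'
    have nxy : x ≠ y := by
      rintro rfl
      exact d1 i ((hY i).mp ((hX i).mpr (by simp)))
    exact h2 (pair_embed' G ((hX (i - 2)).mpr (by simp))
      ((hY (i + 1)).mpr (d2 i))
      hadj
      (fun h => d4 i ((hX (i + 1)).mp h))
      (fun h => d5 i ((hY (i - 2)).mp h.symm))
      (fun h => d6 i ((hc5 _ _).mp h))
      nxy (hnr x hxr _) (fun h => hyr ⟨_, h⟩) (fun h => d7 i (hv h)))
  · obtain ⟨hyr, hyn⟩ := hy
    have hyn' : G.neighborSet y ∩ Set.range v = v '' (({i + 1, i + 1 - 2, i + 1 + 2} : Finset (Fin 5)) : Set (Fin 5)) := by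
      rw [hyn]; simp [Set.image_insert_eq]
    have hY : ∀ j : Fin 5, G.Adj y (v j) ↔ j ∈ ({i + 1, i + 1 - 2, i + 1 + 2} : Finset (Fin 5)) :=
      adj_char G hv hyn'
    have nxy : x ≠ y := by
      rintro rfl
      exact e1 i ((hY i).mp ((hX i).mpr (by simp)))
    exact h2 (pair_embed' G ((hX (i + 2)).mpr (by simp))
      ((hY (i - 1)).mpr (e2 i))
      hadj
      (fun h => e4 i ((hX (i - 1)).mp h))
      (fun h => e5 i ((hY (i + 2)).mp h.symm))
      (fun h => e6 i ((hc5 _ _).mp h))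
      nxy (hnr x hxr _) (fun h => hyr ⟨_, h⟩) (fun h => e7 i (hv h)))
  · obtain ⟨hyr, hyn⟩ := hy
    have hyn' : G.neighborSet y ∩ Set.range v = v '' (({i - 1, i + 1} : Finset (Fin 5)) : Set (Fin 5)) := by
      rw [hyn]; simp [Set.image_insert_eq]
    have hY : ∀ j : Fin 5, G.Adj y (v j) ↔ j ∈ ({i - 1, i + 1} : Finset (Fin 5)) :=
      adj_char G hv hyn'
    have nxy : x ≠ y := by
      rintro rfl
      exact f1 i ((hY i).mp ((hX i).mpr (by simp)))
    exact h2 (pair_embed' G ((hX (i + 2)).mpr (by simp))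
      ((hY (i - 1)).mpr (by simp))
      hadj
      (fun h => e4 i ((hX (i - 1)).mp h))
      (fun h => f5 i ((hY (i + 2)).mp h.symm))
      (fun h => e6 i ((hc5 _ _).mp h))
      nxy (hnr x hxr _) (fun h => hyr ⟨_, h⟩) (fun h => e7 i (hv h)))
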